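/- An integrable function f on X belongs to H¹_z(X) if and only if there exist scalars λ_i with Σ|λ_i| < ∞ and (1,2)-atoms a_i whose supporting balls are entirely contained in X, such that f = Σ λ_i a_i with convergence in L¹(X,ν). -/

import Mathlib

open MeasureTheory Metric Filter Set

noncomputable section

/-- The parabolic quasi-distance on `ℝ × E`. -/
def pdist {E : Type*} [MetricSpace E] (p q : ℝ × E) : ℝ :=
  max (Real.sqrt |p.1 - q.1|) (dist p.2 q.2)

/-- The open parabolic ball in `N = ℝ × E`. -/
def pball {E : Type*} [MetricSpace E] (c : ℝ × E) (r : ℝ) : Set (ℝ × E) :=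
  {p | pdist p c < r}

/-- The upper half space `X = (0,∞) × E` of `N = ℝ × E`. -/
def Xset (E : Type*) : Set (ℝ × E) := {p | 0 < p.1}

/-- The product measure `ν = Lebesgue ⊗ μ` on `N = ℝ × E`. -/
def pmeas {E : Type*} [MeasurableSpace E] (μ : Measure E) : Measure (ℝ × E) :=
  (volume : Measure ℝ).prod μ

/-- A `(1,2)`-atom on `N`: supported in a parabolic ball `Q`, mean value zero, and
`‖a‖_{L²(ν)} ≤ ν(Q)^{-1/2}`. -/
def IsAtom12 {E : Type*} [MetricSpace E] [MeasurableSpace E]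
    (μ : Measure E) (a : ℝ × E → ℝ) : Prop :=
  ∃ (c : ℝ × E) (r : ℝ), 0 < r ∧ Function.support a ⊆ pball c r ∧
    Integrable a (pmeas μ) ∧ (∫ p, a p ∂(pmeas μ)) = 0 ∧
    eLpNorm a 2 (pmeas μ) ≤ (pmeas μ (pball c r)) ^ (-(1:ℝ)/2)

/-- `f = Σ λ_i a_i` with convergence in `L¹(ρ)`. -/
def HasL1Decomp {E : Type*} [MeasurableSpace E] (ρ : Measure (ℝ × E))
    (f : ℝ × E → ℝ) (lam : ℕ → ℝ) (a : ℕ → ℝ × E → ℝ) : Prop :=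
  Summable (fun i => |lam i|) ∧
  Tendsto (fun k => eLpNorm (fun p => f p - ∑ i ∈ Finset.range k, lam i * a i p) 1 ρ)
    atTop (nhds 0)

/-- Membership in the atomic Hardy space `H¹(N)`. -/
def MemH1 {E : Type*} [MetricSpace E] [MeasurableSpace E]
    (μ : Measure E) (f : ℝ × E → ℝ) : Prop :=
  Integrable f (pmeas μ) ∧
  ∃ (lam : ℕ → ℝ) (a : ℕ → ℝ × E → ℝ), (∀ i, IsAtom12 μ (a i)) ∧
    HasL1Decomp (pmeas μ) f lam a

/-- The `H¹(N)` norm: infimum of `Σ |λ_i|` over all atomic decompositions. -/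
def H1norm {E : Type*} [MetricSpace E] [MeasurableSpace E]
    (μ : Measure E) (f : ℝ × E → ℝ) : ℝ :=
  sInf {c | ∃ (lam : ℕ → ℝ) (a : ℕ → ℝ × E → ℝ), (∀ i, IsAtom12 μ (a i)) ∧
    HasL1Decomp (pmeas μ) f lam a ∧ c = ∑' i, |lam i|}

/-- Membership in `H¹_r(X)`: `f ∈ L¹(X,ν)` is the restriction to `X` of some `F ∈ H¹(N)`. -/
def MemH1r {E : Type*} [MetricSpace E] [MeasurableSpace E]
    (μ : Measure E) (f : ℝ × E → ℝ) : Prop :=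
  IntegrableOn f (Xset E) (pmeas μ) ∧
  ∃ F : ℝ × E → ℝ, MemH1 μ F ∧ F =ᵐ[(pmeas μ).restrict (Xset E)] f

/-- The quotient norm on `H¹_r(X)`. -/
def H1rnorm {E : Type*} [MetricSpace E] [MeasurableSpace E]
    (μ : Measure E) (f : ℝ × E → ℝ) : ℝ :=
  sInf {c | ∃ F : ℝ × E → ℝ, MemH1 μ F ∧ F =ᵐ[(pmeas μ).restrict (Xset E)] f ∧
    c = H1norm μ F}

/-- Membership in `H¹_z(X)`: the extension of `f` by zero belongs to `H¹(N)`. -/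
def MemH1z {E : Type*} [MetricSpace E] [MeasurableSpace E]
    (μ : Measure E) (f : ℝ × E → ℝ) : Prop :=
  IntegrableOn f (Xset E) (pmeas μ) ∧ MemH1 μ ((Xset E).indicator f)

/-- The `H¹_z(X)` norm: the `H¹(N)` norm of the zero extension. -/
def H1znorm {E : Type*} [MetricSpace E] [MeasurableSpace E]
    (μ : Measure E) (f : ℝ × E → ℝ) : ℝ :=
  H1norm μ ((Xset E).indicator f)

/-- A `(1,2)`-atom whose supporting ball is entirely contained in `X`. -/
def IsAtom12In {E : Type*} [MetricSpace E] [MeasurableSpace E]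
    (μ : Measure E) (a : ℝ × E → ℝ) : Prop :=
  ∃ (c : ℝ × E) (r : ℝ), 0 < r ∧ Function.support a ⊆ pball c r ∧
    pball c r ⊆ Xset E ∧
    Integrable a (pmeas μ) ∧ (∫ p, a p ∂(pmeas μ)) = 0 ∧
    eLpNorm a 2 (pmeas μ) ≤ (pmeas μ (pball c r)) ^ (-(1:ℝ)/2)

/-!
Fold the lower half space onto `X` by `g ↦ 1_X (g + g ∘ R)`, where `R (t, x) = (-t, x)`.
Folding preserves the integral, at most doubles every `Lᵖ` norm, and is the identity on `X` for
functions vanishing off `X`. If an atom `a` is supported in `Q = pball c r`, its fold is supported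
in `X ∩ (Q ∪ R Q)`, which lies in a ball `Q' ⊆ X` of radius `r` (centred at time `|c.1|`) when
`r² ≤ |c.1|`, and of radius `√2 r` (centred at time `2 r²`) otherwise. Doubling gives
`ν(Q') ≤ 2 C_D ν(Q)`, so `‖fold a‖₂ ≤ 2 ν(Q)^{-1/2} ≤ 2 √(2 C_D) ν(Q')^{-1/2}`, and
`(2 √(2 C_D))⁻¹ fold a` is an atom supported in `X`. Folding an atomic decomposition of the zero
extension of `f` thus yields a decomposition of `f` in `L¹(X)`. Conversely, atoms supported in `X`
vanish off `X`, so their series converges to `f` in `L¹(X)` iff it converges to `1_X f` in `L¹(N)`.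
-/

open scoped ENNReal

section ParabolicBalls

variable {E : Type*} [MetricSpace E]

lemma mem_pball_iff {c p : ℝ × E} {r : ℝ} (hr : 0 < r) :
    p ∈ pball c r ↔ |p.1 - c.1| < r ^ 2 ∧ dist p.2 c.2 < r := by
  simp only [pball, pdist, mem_ofPred_eq, max_lt_iff, Real.sqrt_lt' hr]

lemma pball_eq_prod (c : ℝ × E) {r : ℝ} (hr : 0 < r) :
    pball c r = Ioo (c.1 - r ^ 2) (c.1 + r ^ 2) ×ˢ ball c.2 r := by
  ext p
  rw [mem_pball_iff hr, mem_prod, mem_Ioo, mem_ball, abs_sub_lt_iff]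
  constructor <;> rintro ⟨⟨h₁, h₂⟩, h₃⟩ <;> exact ⟨⟨by linarith, by linarith⟩, h₃⟩

variable [MeasurableSpace E] {μ : Measure E}

lemma pmeas_pball [SFinite μ] (c : ℝ × E) {r : ℝ} (hr : 0 < r) :
    pmeas μ (pball c r) = ENNReal.ofReal (2 * r ^ 2) * μ (ball c.2 r) := by
  rw [pball_eq_prod c hr, pmeas, Measure.prod_prod, Real.volume_Ioo]
  ring_nf

lemma sigmaFinite_of_measure_ball_lt_top (h : ∀ (x : E) (r : ℝ), 0 < r → μ (ball x r) < ⊤) :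
    SigmaFinite μ := by
  rcases isEmpty_or_nonempty E with hE | ⟨⟨x⟩⟩
  · exact Measure.sigmaFinite_of_countable (countable_singleton ∅) (by simp)
      (by simp [eq_empty_of_isEmpty univ])
  · refine Measure.sigmaFinite_of_countable (countable_range fun n : ℕ ↦ ball x (n + 1))
      (forall_mem_range.2 fun n ↦ h x _ n.cast_add_one_pos) ?_
    rw [sUnion_range, iUnion_ball_nat_succ]

lemma pmeas_pball_le_of_doubling [SFinite μ] {C_D : ℝ}
    (hdoub : ∀ (x : E) (r : ℝ), 0 < r → μ (ball x (2 * r)) ≤ ENNReal.ofReal C_D * μ (ball x r))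
    (t t' : ℝ) (x : E) {r r' : ℝ} (hr : 0 < r) (hr' : 0 < r') (hr'r : r' ≤ √2 * r) :
    pmeas μ (pball (t', x) r') ≤ ENNReal.ofReal (2 * C_D) * pmeas μ (pball (t, x) r) := by
  have hsq : r' ^ 2 ≤ 2 * r ^ 2 := by
    calc r' ^ 2 ≤ (√2 * r) ^ 2 := pow_le_pow_left₀ hr'.le hr'r 2
      _ = 2 * r ^ 2 := by rw [mul_pow, Real.sq_sqrt zero_le_two]
  have hsqrt : √2 * r ≤ 2 * r := by
    gcongr
    exact Real.sqrt_two_lt_three_halves.le.trans (by norm_num)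
  have hball : μ (ball x r') ≤ μ (ball x (2 * r)) :=
    measure_mono (ball_subset_ball (hr'r.trans hsqrt))
  rw [pmeas_pball _ hr', pmeas_pball _ hr]
  calc ENNReal.ofReal (2 * r' ^ 2) * μ (ball x r')
      ≤ ENNReal.ofReal (2 * (2 * r ^ 2)) * (ENNReal.ofReal C_D * μ (ball x r)) := by
        gcongr
        exact hball.trans (hdoub x r hr)
    _ = ENNReal.ofReal (2 * C_D) * (ENNReal.ofReal (2 * r ^ 2) * μ (ball x r)) := by
        rw [ENNReal.ofReal_mul (zero_le_two : (0:ℝ) ≤ 2) (q := C_D),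
          ENNReal.ofReal_mul (zero_le_two : (0:ℝ) ≤ 2) (q := 2 * r ^ 2)]
        ring

end ParabolicBalls

section TimeFold

variable {E : Type*} [MeasurableSpace E] {μ : Measure E}

lemma measurableSet_Xset : MeasurableSet (Xset E) :=
  measurableSet_lt measurable_const measurable_fst

variable (E) in
def timeReflection : (ℝ × E) ≃ᵐ (ℝ × E) :=
  (MeasurableEquiv.neg ℝ).prodCongr (MeasurableEquiv.refl E)

@[simp]
lemma timeReflection_apply (p : ℝ × E) : timeReflection E p = (-p.1, p.2) := rfl

lemma measurePreserving_timeReflection [SFinite μ] :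
    MeasurePreserving (timeReflection E) (pmeas μ) (pmeas μ) :=
  (Measure.measurePreserving_neg _).prod (MeasurePreserving.id μ)

lemma timeReflection_preimage_neg : timeReflection E ⁻¹' {p | p.1 < 0} = Xset E := by
  ext p
  simp [Xset]

def timeFold (g : ℝ × E → ℝ) : ℝ × E → ℝ :=
  (Xset E).indicator (g + g ∘ timeReflection E)

lemma timeFold_of_mem {g : ℝ × E → ℝ} {p : ℝ × E} (hp : p ∈ Xset E) :
    timeFold g p = g p + g (-p.1, p.2) :=
  indicator_of_mem hp _

lemma timeFold_of_notMem {g : ℝ × E → ℝ} {p : ℝ × E} (hp : p ∉ Xset E) : timeFold g p = 0 :=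
  indicator_of_notMem hp _

lemma support_timeFold_subset (g : ℝ × E → ℝ) :
    Function.support (timeFold g) ⊆
      Xset E ∩ (Function.support g ∪ timeReflection E ⁻¹' Function.support g) := by
  intro p hp
  by_cases hX : p ∈ Xset E
  · rw [Function.mem_support, timeFold_of_mem hX] at hp
    refine ⟨hX, ?_⟩
    by_contra! h
    simp_all
  · exact absurd (timeFold_of_notMem hX) hp

lemma timeFold_indicator_Xset (f : ℝ × E → ℝ) {p : ℝ × E} (hp : p ∈ Xset E) :
    timeFold ((Xset E).indicator f) p = f p := by
  have hp' : (-p.1, p.2) ∉ Xset E := by simpa [Xset] using le_of_lt hp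
  rw [timeFold_of_mem hp, indicator_of_mem hp, indicator_of_notMem hp', add_zero]

lemma timeFold_sub_sum (F : ℝ × E → ℝ) (lam : ℕ → ℝ) (a : ℕ → ℝ × E → ℝ) (k : ℕ) :
    timeFold (fun p ↦ F p - ∑ i ∈ Finset.range k, lam i * a i p) =
      fun p ↦ timeFold F p - ∑ i ∈ Finset.range k, lam i * timeFold (a i) p := by
  ext p
  by_cases hX : p ∈ Xset E
  · simp only [timeFold_of_mem hX, mul_add, Finset.sum_add_distrib]
    ring
  · simp [timeFold_of_notMem hX]

variable [SFinite μ]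

lemma MeasureTheory.Integrable.timeFold {g : ℝ × E → ℝ} (hg : Integrable g (pmeas μ)) :
    Integrable (timeFold g) (pmeas μ) :=
  (hg.add (measurePreserving_timeReflection.integrable_comp_of_integrable hg)).indicator
    measurableSet_Xset

lemma eLpNorm_timeFold_le {g : ℝ × E → ℝ} (hg : AEStronglyMeasurable g (pmeas μ))
    {q : ℝ≥0∞} (hq : 1 ≤ q) :
    eLpNorm (timeFold g) q (pmeas μ) ≤ 2 * eLpNorm g q (pmeas μ) :=
  calc eLpNorm (timeFold g) q (pmeas μ)
      ≤ eLpNorm (g + g ∘ timeReflection E) q (pmeas μ) := eLpNorm_indicator_le _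
    _ ≤ eLpNorm g q (pmeas μ) + eLpNorm (g ∘ timeReflection E) q (pmeas μ) :=
        eLpNorm_add_le hg (hg.comp_measurePreserving measurePreserving_timeReflection) hq
    _ = 2 * eLpNorm g q (pmeas μ) := by
        rw [eLpNorm_comp_measurePreserving hg measurePreserving_timeReflection, two_mul]

lemma pmeas_setOf_fst_eq_zero : pmeas μ {p : ℝ × E | p.1 = 0} = 0 := by
  have h : {p : ℝ × E | p.1 = 0} = ({0} : Set ℝ) ×ˢ univ := by ext p; simp
  rw [h, pmeas, Measure.prod_prod, Real.volume_singleton, zero_mul]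

lemma integral_timeFold {g : ℝ × E → ℝ} (hg : Integrable g (pmeas μ)) :
    ∫ p, timeFold g p ∂pmeas μ = ∫ p, g p ∂pmeas μ := by
  have hneg : MeasurableSet {p : ℝ × E | p.1 < 0} :=
    measurableSet_lt measurable_fst measurable_const
  have hdisj : Disjoint (Xset E) {p : ℝ × E | p.1 < 0} :=
    disjoint_left.2 fun p (hp : 0 < p.1) (hp' : p.1 < 0) ↦ (hp.trans hp').false
  have hcover : (Xset E ∪ {p : ℝ × E | p.1 < 0} : Set (ℝ × E)) =ᵐ[pmeas μ] univ := by
    refine ae_eq_univ.2 (measure_mono_null (fun p hp ↦ ?_) pmeas_setOf_fst_eq_zero)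
    simp only [mem_compl_iff, mem_union, Xset, mem_ofPred_eq, not_or, not_lt] at hp
    exact le_antisymm hp.1 hp.2
  calc ∫ p, timeFold g p ∂pmeas μ
      = ∫ p in Xset E, g p ∂pmeas μ + ∫ p in Xset E, g (timeReflection E p) ∂pmeas μ := by
        rw [timeFold, integral_indicator measurableSet_Xset]
        exact integral_add hg.integrableOn
          (measurePreserving_timeReflection.integrable_comp_of_integrable hg).integrableOn
    _ = ∫ p in Xset E, g p ∂pmeas μ + ∫ p in {p : ℝ × E | p.1 < 0}, g p ∂pmeas μ := by
        rw [← measurePreserving_timeReflection.setIntegral_preimage_emb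
          (timeReflection E).measurableEmbedding (g := g) (s := {p | p.1 < 0}),
          timeReflection_preimage_neg]
    _ = ∫ p, g p ∂pmeas μ := by
        rw [← setIntegral_union hdisj hneg hg.integrableOn hg.integrableOn,
          setIntegral_congr_set hcover, setIntegral_univ]

lemma tendsto_eLpNorm_restrict_sub_sum_timeFold {f : ℝ × E → ℝ}
    (hf : AEStronglyMeasurable ((Xset E).indicator f) (pmeas μ)) {lam : ℕ → ℝ}
    {a : ℕ → ℝ × E → ℝ} (ha : ∀ i, AEStronglyMeasurable (a i) (pmeas μ))
    (h : Tendsto (fun k ↦ eLpNorm (fun p ↦ (Xset E).indicator f p -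
      ∑ i ∈ Finset.range k, lam i * a i p) 1 (pmeas μ)) atTop (nhds 0)) :
    Tendsto (fun k ↦ eLpNorm (fun p ↦ f p - ∑ i ∈ Finset.range k, lam i * timeFold (a i) p) 1
      ((pmeas μ).restrict (Xset E))) atTop (nhds 0) := by
  refine tendsto_of_tendsto_of_tendsto_of_le_of_le tendsto_const_nhds
    (by simpa using ENNReal.Tendsto.const_mul (a := 2) h (.inr ENNReal.ofNat_ne_top))
    (fun k ↦ zero_le) (fun k ↦ ?_)
  set g := fun p ↦ (Xset E).indicator f p - ∑ i ∈ Finset.range k, lam i * a i p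
  have hg : AEStronglyMeasurable g (pmeas μ) :=
    hf.sub (Finset.aestronglyMeasurable_fun_sum _ fun i _ ↦ (ha i).const_mul _)
  have hfold : (fun p ↦ f p - ∑ i ∈ Finset.range k, lam i * timeFold (a i) p)
      =ᵐ[(pmeas μ).restrict (Xset E)] timeFold g := by
    filter_upwards [ae_restrict_mem measurableSet_Xset] with p hp
    simp only [g, timeFold_sub_sum, timeFold_indicator_Xset f hp]
  calc eLpNorm (fun p ↦ f p - ∑ i ∈ Finset.range k, lam i * timeFold (a i) p) 1
        ((pmeas μ).restrict (Xset E))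
      = eLpNorm (timeFold g) 1 ((pmeas μ).restrict (Xset E)) := eLpNorm_congr_ae hfold
    _ ≤ eLpNorm (timeFold g) 1 (pmeas μ) := eLpNorm_mono_measure _ Measure.restrict_le_self
    _ ≤ 2 * eLpNorm g 1 (pmeas μ) := eLpNorm_timeFold_le hg le_rfl

end TimeFold

lemma eLpNorm_indicator_sub_sum_eq {α : Type*} [MeasurableSpace α] {ρ : Measure α} {s : Set α}
    (hs : MeasurableSet s) (f : α → ℝ) (lam : ℕ → ℝ) {a : ℕ → α → ℝ}
    (ha : ∀ i, Function.support (a i) ⊆ s) (q : ℝ≥0∞) (k : ℕ) :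
    eLpNorm (fun p ↦ s.indicator f p - ∑ i ∈ Finset.range k, lam i * a i p) q ρ =
      eLpNorm (fun p ↦ f p - ∑ i ∈ Finset.range k, lam i * a i p) q (ρ.restrict s) := by
  rw [← eLpNorm_indicator_eq_eLpNorm_restrict hs]
  congr 1
  ext p
  by_cases hp : p ∈ s
  · simp [hp]
  · have hzero : ∀ i, a i p = 0 := fun i ↦ Function.notMem_support.1 fun h ↦ hp (ha i h)
    simp [hp, hzero]

lemma ENNReal.rpow_neg_half_le_of_le_mul {A B κ : ℝ≥0∞} (hκ₀ : κ ≠ 0) (hκ : κ ≠ ⊤)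
    (hA : A ≠ ⊤) (h : B ≤ κ * A) :
    A ^ (-(1:ℝ)/2) ≤ κ ^ ((1:ℝ)/2) * B ^ (-(1:ℝ)/2) :=
  calc A ^ (-(1:ℝ)/2) = κ ^ ((1:ℝ)/2) * (κ * A) ^ (-(1:ℝ)/2) := by
        rw [ENNReal.mul_rpow_of_ne_top hκ hA, ← mul_assoc, ← ENNReal.rpow_add _ _ hκ₀ hκ]
        norm_num
    _ ≤ κ ^ ((1:ℝ)/2) * B ^ (-(1:ℝ)/2) := by
        rw [neg_div, ENNReal.rpow_neg, ENNReal.rpow_neg]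
        gcongr

section Atoms

variable {E : Type*} [MetricSpace E] [MeasurableSpace E] {μ : Measure E}

lemma exists_pball_subset_Xset (c : ℝ × E) {r : ℝ} (hr : 0 < r) :
    ∃ t' r', 0 < r' ∧ r' ≤ √2 * r ∧ pball (t', c.2) r' ⊆ Xset E ∧
      Xset E ∩ (pball c r ∪ timeReflection E ⁻¹' pball c r) ⊆ pball (t', c.2) r' := by
  rcases le_or_gt (r ^ 2) |c.1| with hc | hc
  · refine ⟨|c.1|, r, hr, le_mul_of_one_le_left hr.le Real.one_lt_sqrt_two.le, ?_, ?_⟩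
    · intro p hp
      rw [mem_pball_iff hr, abs_sub_lt_iff] at hp
      show 0 < p.1
      linarith
    · rintro p ⟨hX, hp⟩
      have hX : 0 < p.1 := hX
      simp only [mem_union, mem_preimage, timeReflection_apply, mem_pball_iff hr] at hp ⊢
      refine ⟨?_, hp.elim And.right And.right⟩
      rcases abs_cases c.1 with ⟨hc', -⟩ | ⟨hc', -⟩ <;> rw [hc'] at hc ⊢ <;>
        rcases hp with ⟨hp, -⟩ | ⟨hp, -⟩ <;> rw [abs_sub_lt_iff] at hp ⊢ <;>
        constructor <;> linarith
  · have hρ : 0 < √2 * r := by positivity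
    have hρsq : (√2 * r) ^ 2 = 2 * r ^ 2 := by rw [mul_pow, Real.sq_sqrt zero_le_two]
    refine ⟨2 * r ^ 2, √2 * r, hρ, le_rfl, ?_, ?_⟩
    · intro p hp
      rw [mem_pball_iff hρ, hρsq, abs_sub_lt_iff] at hp
      show 0 < p.1
      linarith
    · rintro p ⟨hX, hp⟩
      have hX : 0 < p.1 := hX
      have hdist : dist p.2 c.2 < r → dist p.2 c.2 < √2 * r := fun h ↦
        h.trans_le (le_mul_of_one_le_left hr.le Real.one_lt_sqrt_two.le)
      simp only [mem_union, mem_preimage, timeReflection_apply, mem_pball_iff hr] at hp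
      rw [mem_pball_iff hρ, hρsq]
      rw [abs_lt] at hc
      rcases hp with ⟨hp, hd⟩ | ⟨hp, hd⟩ <;> rw [abs_sub_lt_iff] at hp <;>
        refine ⟨abs_sub_lt_iff.2 ⟨by linarith, by linarith⟩, hdist hd⟩

lemma IsAtom12.isAtom12In_timeFold {C_D : ℝ} (hCD : 0 < C_D)
    (hfin : ∀ (x : E) (r : ℝ), 0 < r → μ (ball x r) < ⊤)
    (hdoub : ∀ (x : E) (r : ℝ), 0 < r → μ (ball x (2 * r)) ≤ ENNReal.ofReal C_D * μ (ball x r))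
    {a : ℝ × E → ℝ} (ha : IsAtom12 μ a) :
    IsAtom12In μ (fun p ↦ (2 * √(2 * C_D))⁻¹ * timeFold a p) := by
  have := sigmaFinite_of_measure_ball_lt_top hfin
  obtain ⟨c, r, hr, hsupp, hint, hmean, hnorm⟩ := ha
  obtain ⟨t', r', hr', hr'r, hsubX, hcover⟩ := exists_pball_subset_Xset c hr
  set κ := ENNReal.ofReal (2 * C_D)
  have hκ₀ : κ ≠ 0 := by simp [κ, hCD]
  have hK : ‖(2 * √(2 * C_D))⁻¹‖ₑ = (2 * κ ^ ((1:ℝ)/2))⁻¹ := by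
    rw [enorm_inv (by positivity), Real.enorm_of_nonneg (by positivity),
      ENNReal.ofReal_mul zero_le_two, Real.sqrt_eq_rpow,
      ← ENNReal.ofReal_rpow_of_nonneg (by positivity) (by norm_num), ENNReal.ofReal_ofNat]
  have hA : pmeas μ (pball c r) ≠ ⊤ := by
    rw [pmeas_pball c hr]
    exact ENNReal.mul_ne_top ENNReal.ofReal_ne_top (hfin c.2 r hr).ne
  refine ⟨(t', c.2), r', hr', ?_, hsubX, hint.timeFold.const_mul _, ?_, ?_⟩
  · calc Function.support (fun p ↦ (2 * √(2 * C_D))⁻¹ * timeFold a p)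
        ⊆ Function.support (timeFold a) := Function.support_mul_subset_right _ _
      _ ⊆ Xset E ∩ (Function.support a ∪ timeReflection E ⁻¹' Function.support a) :=
          support_timeFold_subset a
      _ ⊆ Xset E ∩ (pball c r ∪ timeReflection E ⁻¹' pball c r) := by gcongr
      _ ⊆ pball (t', c.2) r' := hcover
  · rw [integral_const_mul, integral_timeFold hint, hmean, mul_zero]
  · calc eLpNorm (fun p ↦ (2 * √(2 * C_D))⁻¹ * timeFold a p) 2 (pmeas μ)
        = (2 * κ ^ ((1:ℝ)/2))⁻¹ * eLpNorm (timeFold a) 2 (pmeas μ) := by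
          rw [← hK, ← eLpNorm_const_smul]
          rfl
      _ ≤ (2 * κ ^ ((1:ℝ)/2))⁻¹ * (2 * κ ^ ((1:ℝ)/2) *
            pmeas μ (pball (t', c.2) r') ^ (-(1:ℝ)/2)) := by
          rw [mul_assoc 2]
          gcongr
          refine (eLpNorm_timeFold_le hint.aestronglyMeasurable one_le_two).trans ?_
          gcongr
          exact hnorm.trans (ENNReal.rpow_neg_half_le_of_le_mul hκ₀ ENNReal.ofReal_ne_top hA
            (pmeas_pball_le_of_doubling hdoub c.1 t' c.2 hr hr' hr'r))
      _ = pmeas μ (pball (t', c.2) r') ^ (-(1:ℝ)/2) := by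
          rw [← mul_assoc, ENNReal.inv_mul_cancel, one_mul]
          · exact mul_ne_zero two_ne_zero
              (ENNReal.rpow_pos (pos_iff_ne_zero.2 hκ₀) ENNReal.ofReal_ne_top).ne'
          · exact ENNReal.mul_ne_top ENNReal.ofNat_ne_top
              (ENNReal.rpow_ne_top_of_nonneg (by norm_num) ENNReal.ofReal_ne_top)

lemma IsAtom12.integrable {a : ℝ × E → ℝ} (ha : IsAtom12 μ a) : Integrable a (pmeas μ) := by
  obtain ⟨-, -, -, -, h, -⟩ := ha
  exact h

lemma IsAtom12In.isAtom12 {a : ℝ × E → ℝ} (ha : IsAtom12In μ a) : IsAtom12 μ a := by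
  obtain ⟨c, r, hr, hsupp, -, hint, hmean, hnorm⟩ := ha
  exact ⟨c, r, hr, hsupp, hint, hmean, hnorm⟩

lemma IsAtom12In.support_subset {a : ℝ × E → ℝ} (ha : IsAtom12In μ a) :
    Function.support a ⊆ Xset E := by
  obtain ⟨_, _, -, hsupp, hX, -⟩ := ha
  exact hsupp.trans hX

end Atoms

theorem stmt2_general {E : Type*} [MetricSpace E] [MeasurableSpace E]
    (μ : Measure E) (C_D : ℝ) (hCD : 1 ≤ C_D)
    (hvol : ∀ (x : E) (r : ℝ), 0 < r → 0 < μ (ball x r) ∧ μ (ball x r) < ⊤)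
    (hdoub : ∀ (x : E) (r : ℝ), 0 < r →
      μ (ball x (2 * r)) ≤ ENNReal.ofReal C_D * μ (ball x r))
    (f : ℝ × E → ℝ) (hf : IntegrableOn f (Xset E) (pmeas μ)) :
    MemH1z μ f ↔
      ∃ (lam : ℕ → ℝ) (a : ℕ → ℝ × E → ℝ), (∀ i, IsAtom12In μ (a i)) ∧
        Summable (fun i => |lam i|) ∧
        Tendsto (fun k => eLpNorm
            (fun p => f p - ∑ i ∈ Finset.range k, lam i * a i p) 1
            ((pmeas μ).restrict (Xset E)))
          atTop (nhds 0) := by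
  have hfin : ∀ (x : E) (r : ℝ), 0 < r → μ (ball x r) < ⊤ := fun x r hr ↦ (hvol x r hr).2
  have := sigmaFinite_of_measure_ball_lt_top hfin
  constructor
  · rintro ⟨-, hF, lam, a, hatoms, hsum, htend⟩
    set K := 2 * √(2 * C_D)
    have hK : K ≠ 0 := by positivity
    have hcancel : ∀ i p, K * lam i * (K⁻¹ * timeFold (a i) p) = lam i * timeFold (a i) p :=
      fun i p ↦ by field_simp
    refine ⟨fun i ↦ K * lam i, fun i p ↦ K⁻¹ * timeFold (a i) p,
      fun i ↦ (hatoms i).isAtom12In_timeFold (by linarith) hfin hdoub,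
      by simpa only [abs_mul] using hsum.mul_left |K|, ?_⟩
    simp_rw [hcancel]
    exact tendsto_eLpNorm_restrict_sub_sum_timeFold hF.aestronglyMeasurable
      (fun i ↦ (hatoms i).integrable.aestronglyMeasurable) htend
  · rintro ⟨lam, a, hatoms, hsum, htend⟩
    refine ⟨hf, hf.integrable_indicator measurableSet_Xset, lam, a,
      fun i ↦ (hatoms i).isAtom12, hsum, ?_⟩
    simpa only [eLpNorm_indicator_sub_sum_eq measurableSet_Xset f lam
      (fun i ↦ (hatoms i).support_subset)] using htend

/-- an integrable function `f` on `X` belongs to `H¹_z(X)` iff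
`f = Σ λ_i a_i` in `L¹(X,ν)` with `Σ|λ_i| < ∞` and `(1,2)`-atoms `a_i` whose supporting
balls are entirely contained in `X`. -/
theorem stmt2 {E : Type*} [MetricSpace E] [MeasurableSpace E] [BorelSpace E]
    (μ : Measure E) (C_D : ℝ) (hCD : 1 ≤ C_D)
    (hvol : ∀ (x : E) (r : ℝ), 0 < r → 0 < μ (ball x r) ∧ μ (ball x r) < ⊤)
    (hdoub : ∀ (x : E) (r : ℝ), 0 < r →
      μ (ball x (2 * r)) ≤ ENNReal.ofReal C_D * μ (ball x r))
    (f : ℝ × E → ℝ) (hf : IntegrableOn f (Xset E) (pmeas μ)) :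
    MemH1z μ f ↔
      ∃ (lam : ℕ → ℝ) (a : ℕ → ℝ × E → ℝ), (∀ i, IsAtom12In μ (a i)) ∧
        Summable (fun i => |lam i|) ∧
        Tendsto (fun k => eLpNorm
            (fun p => f p - ∑ i ∈ Finset.range k, lam i * a i p) 1
            ((pmeas μ).restrict (Xset E)))
          atTop (nhds 0) :=
  stmt2_general μ C_D hCD hvol hdoub f hf
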